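/- Let k ≥ 2, let λ_{ij}, μ_{ij} be nonzero complex numbers for (i,j) ∈ P, and let y_1,…,y_k ∈ ℂ be such that for every i and every j ≠ i one has y_i ≠ a_{ij} and y_i ≠ a_{ji}. Define Λ(u_1,…,u_k) = ϑ( (λ_{ij}·(a_{ij} − u_i)), (μ_{ij}·(a_{ij} − u_j)) ) and assume Λ(y_1,…,y_k) ≠ 0. Fix l ∈ {1,…,k} and suppose Q_1,…,Q_k ∈ ℂ[ζ] are polynomials of degree at most k−1 satisfying λ_{ij}·Q_i(a_{ij}) + μ_{ij}·Q_j(a_{ij}) = 0 for all (i,j) ∈ P and Q_j(y_j) = 0 for all j ≠ l. Then there exists a constant c ∈ ℂ such that Q_l(ζ) = c · Λ(y_1,…,y_{l−1}, ζ, y_{l+1},…,y_k) for all ζ ∈ ℂ. -/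

import Mathlib

namespace ReducibleSpectral

noncomputable section

/-- The row index `(i, t)` (with `t : Fin (k-1)`) corresponds to the pair `(i, j) ∈ P`
(where `P = {(i,j) : i ≠ j}`), with `j` the `t`-th element of `{0,…,k-1} \ {i}`;
this identification is order-preserving for the lexicographic orders. -/
def colToRow (k : ℕ) (i : Fin k) (t : Fin (k - 1)) : Fin k :=
  if (t : ℕ) < (i : ℕ) then ⟨t, by have := t.isLt; omega⟩
  else ⟨(t : ℕ) + 1, by have := t.isLt; have := i.isLt; omega⟩

/-- The matrix `Ξ(λ,μ)`: rows indexed by `P = {(i,j) : i ≠ j}` (in lexicographic order,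
encoded via `colToRow`), columns indexed by pairs `(m,n)`, `m ∈ {1,…,k}`, `n ∈ {0,…,k-2}`
(lexicographic); the entry at row `(i,j)`, column `(m,n)` is `λ_{ij}·a_{ij}^n` if `m = i`,
`μ_{ij}·a_{ij}^n` if `m = j`, and `0` otherwise. -/
def Xi (k : ℕ) (a lam mu : Fin k → Fin k → ℂ) :
    Matrix (Fin k × Fin (k - 1)) (Fin k × Fin (k - 1)) ℂ :=
  fun p q =>
    if q.1 = p.1 then lam p.1 (colToRow k p.1 p.2) * a p.1 (colToRow k p.1 p.2) ^ (q.2 : ℕ)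
    else if q.1 = colToRow k p.1 p.2 then
      mu p.1 (colToRow k p.1 p.2) * a p.1 (colToRow k p.1 p.2) ^ (q.2 : ℕ)
    else 0

/-- The extended theta function `ϑ(λ,μ) = det Ξ(λ,μ)`. -/
def theta (k : ℕ) (a lam mu : Fin k → Fin k → ℂ) : ℂ := (Xi k a lam mu).det

/-- The index set `P = {(i,j) : i,j ∈ {1,…,k}, i ≠ j}` as a finset. -/
def Pfin (k : ℕ) : Finset (Fin k × Fin k) :=
  Finset.univ.filter fun p => p.1 ≠ p.2

/-- For `L ⊆ P`, the set `L_i = {(i,j) ∈ L} ∪ {(m,i) ∈ P : (m,i) ∉ L}`. -/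
def Lset (k : ℕ) (L : Finset (Fin k × Fin k)) (i : Fin k) : Finset (Fin k × Fin k) :=
  (L.filter fun p => p.1 = i) ∪ ((Pfin k \ L).filter fun p => p.2 = i)

/-- `L ⊆ P` is regular iff every `L_i` has cardinality `k - 1`. -/
def IsRegular (k : ℕ) (L : Finset (Fin k × Fin k)) : Prop :=
  ∀ i : Fin k, (Lset k L i).card = k - 1


/-- The function `Λ(u_1,…,u_k) = ϑ((λ_{ij}·(a_{ij} − u_i)), (μ_{ij}·(a_{ij} − u_j)))`. -/
def LambdaFun (k : ℕ) (a lam mu : Fin k → Fin k → ℂ) (u : Fin k → ℂ) : ℂ :=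
  theta k a (fun i j => lam i j * (a i j - u i)) (fun i j => mu i j * (a i j - u j))


open Polynomial Matrix Finset

section Aux

variable (k : ℕ) (a lam mu : Fin k → Fin k → ℂ) (y : Fin k → ℂ) (l : Fin k)

lemma colToRow_ne (i : Fin k) (t : Fin (k - 1)) : colToRow k i t ≠ i := by
  unfold colToRow
  split <;> (intro h; apply_fun Fin.val at h; simp only at h; omega)

def up : Fin k → ℂ[X] := fun m => if m = l then X else C (y m)

def Mp : Matrix (Fin k × Fin (k - 1)) (Fin k × Fin (k - 1)) ℂ[X] := fun p q =>
  if q.1 = p.1 then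
    C (lam p.1 (colToRow k p.1 p.2)) * (C (a p.1 (colToRow k p.1 p.2)) - up k y l p.1)
      * C (a p.1 (colToRow k p.1 p.2)) ^ (q.2 : ℕ)
  else if q.1 = colToRow k p.1 p.2 then
    C (mu p.1 (colToRow k p.1 p.2)) * (C (a p.1 (colToRow k p.1 p.2)) - up k y l (colToRow k p.1 p.2))
      * C (a p.1 (colToRow k p.1 p.2)) ^ (q.2 : ℕ)
  else 0

lemma eval_Mp (ζ : ℂ) :
    (RingHom.mapMatrix (evalRingHom ζ) : Matrix _ _ ℂ[X] →+* _) (Mp k a lam mu y l)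
      = Xi k a (fun i j => lam i j * (a i j - Function.update y l ζ i))
          (fun i j => mu i j * (a i j - Function.update y l ζ j)) := by
  ext p q
  simp only [RingHom.mapMatrix_apply, Matrix.map_apply, Mp, Xi]
  split_ifs with h1 h2 <;>
    simp [up, Function.update_apply, apply_ite (eval ζ), mul_comm, mul_assoc, mul_left_comm]

lemma eval_det_Mp (ζ : ℂ) :
    ((Mp k a lam mu y l).det).eval ζ = LambdaFun k a lam mu (Function.update y l ζ) := by
  have h := eval_Mp k a lam mu y l ζ
  have : (evalRingHom ζ) (Mp k a lam mu y l).det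
      = ((RingHom.mapMatrix (evalRingHom ζ)) (Mp k a lam mu y l)).det := by
    exact RingHom.map_det _ _
  rw [LambdaFun, theta, ← h]
  exact this


/-- scalar entries of the auxiliary column vectors `w_r`. -/
def wc (r : ℕ) : (Fin k × Fin (k - 1)) → ℂ := fun p =>
  if p.1 = l then lam p.1 (colToRow k p.1 p.2) * a p.1 (colToRow k p.1 p.2) ^ r
  else if colToRow k p.1 p.2 = l then mu p.1 (colToRow k p.1 p.2) * a p.1 (colToRow k p.1 p.2) ^ r
  else 0

lemma Mp_col_l (n : Fin (k - 1)) (p : Fin k × Fin (k - 1)) :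
    Mp k a lam mu y l p (l, n)
      = C (wc k a lam mu l ((n : ℕ) + 1) p) - X * C (wc k a lam mu l (n : ℕ) p) := by
  rcases p with ⟨i, t⟩
  have hne := colToRow_ne k i t
  simp only [Mp, wc, up]
  by_cases h1 : l = i
  · rw [if_pos h1, if_pos h1.symm, if_pos h1.symm, if_pos h1.symm]
    simp only [C_mul, C_pow, pow_succ]
    ring
  · have h1' : ¬ i = l := fun h => h1 h.symm
    by_cases h2 : l = colToRow k i t
    · rw [if_neg h1, if_pos h2, if_neg h1', if_pos h2.symm, if_neg h1', if_pos h2.symm,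
        if_pos h2.symm]
      simp only [C_mul, C_pow, pow_succ]
      ring
    · have h2' : ¬ colToRow k i t = l := fun h => h2 h.symm
      rw [if_neg h1, if_neg h2, if_neg h1', if_neg h2', if_neg h1', if_neg h2']
      simp

lemma Mp_col_ne (q : Fin k × Fin (k - 1)) (hq : q.1 ≠ l) (p : Fin k × Fin (k - 1)) :
    ∃ c : ℂ, Mp k a lam mu y l p q = C c := by
  rcases p with ⟨i, t⟩
  simp only [Mp, up]
  split_ifs with h1 h2 h3 h4
  · exact absurd (h1.trans h2) hq
  · exact ⟨lam i (colToRow k i t) * ((a i (colToRow k i t)) - y i)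
      * a i (colToRow k i t) ^ (q.2 : ℕ), by simp only [C_mul, C_sub, C_pow]⟩
  · exact absurd (h3.trans h4) hq
  · exact ⟨mu i (colToRow k i t) * ((a i (colToRow k i t)) - y (colToRow k i t))
      * a i (colToRow k i t) ^ (q.2 : ℕ), by simp only [C_mul, C_sub, C_pow]⟩
  · exact ⟨0, by simp⟩

lemma det_const (B : Matrix (Fin k × Fin (k - 1)) (Fin k × Fin (k - 1)) ℂ[X])
    (h : ∀ p q, ∃ c : ℂ, B p q = C c) : ∃ c : ℂ, B.det = C c := by
  choose f hf using h
  refine ⟨(Matrix.of f).det, ?_⟩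
  have hB : B = (RingHom.mapMatrix (C : ℂ →+* ℂ[X])) (Matrix.of f) := by
    ext p q
    simp [hf p q]
  rw [hB]
  exact (RingHom.map_det _ _).symm

lemma Jzero (q0 : Fin k × Fin (k - 1)) (hq0 : q0.1 ≠ l) :
    ∀ (t : ℕ) (ht : t < k - 1) (B : Matrix (Fin k × Fin (k - 1)) (Fin k × Fin (k - 1)) ℂ[X]),
      (∀ s : Fin (k - 1), (s : ℕ) < t →
          ∀ p, B p (l, s) = C (wc k a lam mu l ((s : ℕ) + 1) p) - X * C (wc k a lam mu l (s : ℕ) p)) →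
      (∀ p, B p (l, ⟨t, ht⟩) = C (wc k a lam mu l t p)) →
      (∀ p, B p q0 = C (wc k a lam mu l 0 p)) →
      B.det = 0 := by
  intro t
  induction t with
  | zero =>
    intro ht B _ hcol hq
    refine Matrix.det_zero_of_column_eq (show ((l, ⟨0, ht⟩) : Fin k × Fin (k - 1)) ≠ q0
      from fun h => hq0 (by rw [← h])) (fun p => ?_)
    rw [hcol p, hq p]
  | succ s ih =>
    intro ht B hvar hcol hq
    have hs : s < k - 1 := Nat.lt_of_succ_lt ht
    have hcs : ((⟨s, hs⟩ : Fin (k - 1)) : ℕ) < s + 1 := Nat.lt_succ_self s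
    have hsplit : (fun p => B p (l, ⟨s, hs⟩))
        = (fun p => C (wc k a lam mu l (s + 1) p)) + ((-X : ℂ[X]) • ((fun p => C (wc k a lam mu l s p)) : (Fin k × Fin (k-1)) → ℂ[X])) := by
      funext p
      have := hvar ⟨s, hs⟩ hcs p
      simp only [this, Pi.add_apply, Pi.smul_apply, smul_eq_mul]
      ring
    have hB : B = B.updateCol (l, ⟨s, hs⟩) (fun p => B p (l, ⟨s, hs⟩)) :=
      (Matrix.updateCol_eq_self B _).symm
    have hne1 : ((l, ⟨s + 1, ht⟩) : Fin k × Fin (k - 1)) ≠ (l, ⟨s, hs⟩) := by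
      intro h
      have := congrArg (fun p => (p.2 : ℕ)) h
      simp at this
    have hneq0 : q0 ≠ ((l, ⟨s, hs⟩) : Fin k × Fin (k - 1)) := fun h => hq0 (by rw [h])
    have hdet : B.det
        = (B.updateCol (l, ⟨s, hs⟩) (fun p => C (wc k a lam mu l (s + 1) p))).det
          + (-X) * (B.updateCol (l, ⟨s, hs⟩) (fun p => C (wc k a lam mu l s p))).det := by
      conv_lhs => rw [hB]
      rw [hsplit, Matrix.det_updateCol_add, Matrix.det_updateCol_smul]
    have hzero1 : (B.updateCol (l, ⟨s, hs⟩) (fun p => C (wc k a lam mu l (s + 1) p))).det = 0 := by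
      refine Matrix.det_zero_of_column_eq (show ((l, ⟨s, hs⟩) : Fin k × Fin (k - 1)) ≠ (l, ⟨s+1, ht⟩)
        from fun h => by have := congrArg (fun p => (p.2 : ℕ)) h; simp at this) (fun p => ?_)
      rw [Matrix.updateCol_apply, if_pos rfl, Matrix.updateCol_apply, if_neg hne1, hcol p]
    have hzero2 : (B.updateCol (l, ⟨s, hs⟩) (fun p => C (wc k a lam mu l s p))).det = 0 := by
      refine ih hs _ (fun s' hs' p => ?_) (fun p => ?_) (fun p => ?_)
      · rw [Matrix.updateCol_apply, if_neg (show ((l, s') : Fin k × Fin (k-1)) ≠ (l, ⟨s, hs⟩)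
          from fun h => by have := congrArg (fun p => (p.2 : ℕ)) h; simp at this; omega)]
        exact hvar s' (Nat.lt_succ_of_lt hs') p
      · rw [Matrix.updateCol_apply, if_pos rfl]
      · rw [Matrix.updateCol_apply, if_neg hneq0, hq p]
    rw [hdet, hzero1, hzero2]
    ring

lemma Fconst (q0 : Fin k × Fin (k - 1)) (hq0 : q0.1 ≠ l) :
    ∀ (r : ℕ) (B : Matrix (Fin k × Fin (k - 1)) (Fin k × Fin (k - 1)) ℂ[X]),
      (∀ s : Fin (k - 1), (s : ℕ) < r →
          ∀ p, B p (l, s) = C (wc k a lam mu l ((s : ℕ) + 1) p) - X * C (wc k a lam mu l (s : ℕ) p)) →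
      (∀ p, B p q0 = C (wc k a lam mu l 0 p)) →
      (∀ q : Fin k × Fin (k - 1), q ≠ q0 → (q.1 = l → ¬ ((q.2 : ℕ) < r)) → ∀ p, ∃ c : ℂ, B p q = C c) →
      ∃ c : ℂ, B.det = C c := by
  intro r
  induction r with
  | zero =>
    intro B _ hq hconst
    refine det_const k _ (fun p q => ?_)
    by_cases h : q = q0
    · exact ⟨_, by rw [h, hq p]⟩
    · exact hconst q h (fun _ => by omega) p
  | succ r ih =>
    intro B hvar hq hconst
    by_cases hr : r < k - 1
    · have hcr : ((⟨r, hr⟩ : Fin (k - 1)) : ℕ) < r + 1 := Nat.lt_succ_self r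
      have hneq0 : q0 ≠ ((l, ⟨r, hr⟩) : Fin k × Fin (k - 1)) := fun h => hq0 (by rw [h])
      have hsplit : (fun p => B p (l, ⟨r, hr⟩))
          = (fun p => C (wc k a lam mu l (r + 1) p))
            + ((-X : ℂ[X]) • ((fun p => C (wc k a lam mu l r p)) : (Fin k × Fin (k-1)) → ℂ[X])) := by
        funext p
        have := hvar ⟨r, hr⟩ hcr p
        simp only [this, Pi.add_apply, Pi.smul_apply, smul_eq_mul]
        ring
      have hdet : B.det
          = (B.updateCol (l, ⟨r, hr⟩) (fun p => C (wc k a lam mu l (r + 1) p))).det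
            + (-X) * (B.updateCol (l, ⟨r, hr⟩) (fun p => C (wc k a lam mu l r p))).det := by
        conv_lhs => rw [(Matrix.updateCol_eq_self B ((l, ⟨r, hr⟩) : Fin k × Fin (k-1))).symm]
        rw [hsplit, Matrix.det_updateCol_add, Matrix.det_updateCol_smul]
      have hzero2 : (B.updateCol (l, ⟨r, hr⟩) (fun p => C (wc k a lam mu l r p))).det = 0 := by
        refine Jzero k a lam mu l q0 hq0 r hr _ (fun s' hs' p => ?_) (fun p => ?_) (fun p => ?_)
        · rw [Matrix.updateCol_apply, if_neg (show ((l, s') : Fin k × Fin (k-1)) ≠ (l, ⟨r, hr⟩)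
            from fun h => by have := congrArg (fun p => (p.2 : ℕ)) h; simp at this; omega)]
          exact hvar s' (Nat.lt_succ_of_lt hs') p
        · rw [Matrix.updateCol_apply, if_pos rfl]
        · rw [Matrix.updateCol_apply, if_neg hneq0, hq p]
      obtain ⟨c, hc⟩ := ih (B.updateCol (l, ⟨r, hr⟩) (fun p => C (wc k a lam mu l (r + 1) p)))
        (fun s' hs' p => by
          rw [Matrix.updateCol_apply, if_neg (show ((l, s') : Fin k × Fin (k-1)) ≠ (l, ⟨r, hr⟩)
            from fun h => by have := congrArg (fun p => (p.2 : ℕ)) h; simp at this; omega)]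
          exact hvar s' (Nat.lt_succ_of_lt hs') p)
        (fun p => by rw [Matrix.updateCol_apply, if_neg hneq0, hq p])
        (fun q hql hq2 p => by
          by_cases hqr : q = ((l, ⟨r, hr⟩) : Fin k × Fin (k-1))
          · exact ⟨_, by rw [hqr, Matrix.updateCol_apply, if_pos rfl]⟩
          · rw [Matrix.updateCol_apply, if_neg hqr]
            refine hconst q hql (fun hl => ?_) p
            intro hlt
            rcases Nat.lt_succ_iff_lt_or_eq.mp hlt with h | h
            · exact hq2 hl h
            · exact hqr (Prod.ext hl (Fin.ext h)))
      exact ⟨c, by rw [hdet, hzero2, hc]; ring⟩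
    · refine ih B (fun s' hs' p => hvar s' (Nat.lt_succ_of_lt hs') p) hq
        (fun q hql hq2 p => ?_)
      refine hconst q hql (fun hl => ?_) p
      have := q.2.isLt
      omega

lemma cramer_col_const (q0 : Fin k × Fin (k - 1)) (hq0 : q0.1 ≠ l) :
    ∃ c : ℂ, ((Mp k a lam mu y l).updateCol q0 (fun p => C (wc k a lam mu l 0 p))).det = C c := by
  refine Fconst k a lam mu l q0 hq0 (k - 1) _ (fun s hs p => ?_) (fun p => ?_)
    (fun q hql hq2 p => ?_)
  · rw [Matrix.updateCol_apply, if_neg (show ((l, s) : Fin k × Fin (k-1)) ≠ q0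
      from fun h => hq0 (by rw [← h]))]
    exact Mp_col_l k a lam mu y l s p
  · rw [Matrix.updateCol_apply, if_pos rfl]
  · have hql2 : q.1 ≠ l := by
      intro h
      exact hq2 h q.2.isLt
    rw [Matrix.updateCol_apply, if_neg hql]
    exact Mp_col_ne k a lam mu y l q hql2 p

/-- quotient polynomials `S_m = Q_m / (X - y_m)`. -/
def Sq (Q : Fin k → ℂ[X]) : Fin k → ℂ[X] := fun m => Q m /ₘ (X - C (y m))

/-- the `(l,n)`-entries of the vector `x`: coefficients of `(Q_l(ξ) - Q_l(X))/(ξ - X)`. -/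
def xl (Q : Fin k → ℂ[X]) : Fin (k - 1) → ℂ[X] := fun n =>
  ∑ m ∈ Finset.range k, if (n : ℕ) < m then C ((Q l).coeff m) * X ^ (m - 1 - (n : ℕ)) else 0

def xvec (Q : Fin k → ℂ[X]) : (Fin k × Fin (k - 1)) → ℂ[X] := fun q =>
  if q.1 = l then xl k l Q q.2 else C ((Sq k y Q q.1).coeff q.2)

lemma sum_coeff_eval {p : ℂ[X]} (hp : p.natDegree < k - 1) (α : ℂ) :
    ∑ n : Fin (k - 1), p.coeff (n : ℕ) * α ^ (n : ℕ) = p.eval α := by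
  rw [eval_eq_sum_range' hp α]
  exact Fin.sum_univ_eq_sum_range (fun n => p.coeff n * α ^ n) (k - 1)

lemma natDegree_Sq_lt (hk : 2 ≤ k) (Q : Fin k → ℂ[X]) (m : Fin k)
    (hdegQ : (Q m).natDegree ≤ k - 1) : (Sq k y Q m).natDegree < k - 1 := by
  rcases eq_or_ne (Q m) 0 with h | h
  · rw [Sq]
    simp only [h, Polynomial.zero_divByMonic, natDegree_zero]
    omega
  · rw [Sq, natDegree_divByMonic _ (monic_X_sub_C (y m)), natDegree_X_sub_C]
    omega

lemma geo (Q : Fin k → ℂ[X]) (hdeg : (Q l).natDegree < k) (α : ℂ) :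
    (C α - X) * (∑ n : Fin (k - 1), xl k l Q n * C α ^ (n : ℕ))
      = C ((Q l).eval α) - Q l := by
  have h1 : ∑ n : Fin (k - 1), xl k l Q n * C α ^ (n : ℕ)
      = ∑ n ∈ range (k - 1), ∑ m ∈ range k,
          (if n < m then C ((Q l).coeff m) * X ^ (m - 1 - n) else 0) * C α ^ n := by
    rw [← Fin.sum_univ_eq_sum_range (fun n => ∑ m ∈ range k,
      (if n < m then C ((Q l).coeff m) * X ^ (m - 1 - n) else 0) * C α ^ n) (k - 1)]
    refine Finset.sum_congr rfl fun n _ => ?_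
    rw [xl, Finset.sum_mul]
  rw [h1, Finset.sum_comm, Finset.mul_sum]
  have h2 : ∀ m ∈ range k,
      (C α - X) * (∑ n ∈ range (k - 1),
          (if n < m then C ((Q l).coeff m) * X ^ (m - 1 - n) else 0) * C α ^ n)
        = C ((Q l).coeff m) * (C α ^ m - X ^ m) := by
    intro m hm
    have hmk : m ≤ k - 1 := by have := mem_range.mp hm; omega
    have hsub : ∑ n ∈ range (k - 1),
        (if n < m then C ((Q l).coeff m) * X ^ (m - 1 - n) else 0) * C α ^ n
        = ∑ n ∈ range m, C ((Q l).coeff m) * X ^ (m - 1 - n) * C α ^ n := by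
      rw [← Finset.sum_subset (Finset.range_subset_range.mpr hmk)
        (fun n _ hn => by rw [if_neg (fun hc => hn (mem_range.mpr hc)), zero_mul])]
      exact Finset.sum_congr rfl fun n hn => by rw [if_pos (mem_range.mp hn)]
    rw [hsub]
    have h3 : ∑ n ∈ range m, C ((Q l).coeff m) * X ^ (m - 1 - n) * C α ^ n
        = C ((Q l).coeff m) * (∑ n ∈ range m, C α ^ n * X ^ (m - 1 - n)) := by
      rw [Finset.mul_sum]
      exact Finset.sum_congr rfl fun n _ => by ring
    rw [h3, ← mul_assoc, mul_comm (C α - X) (C ((Q l).coeff m)), mul_assoc,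
      ← geom_sum₂_mul (C α) X m]
    ring
  rw [Finset.sum_congr rfl h2]
  have h4 : ∑ m ∈ range k, C ((Q l).coeff m) * (C α ^ m - X ^ m)
      = (∑ m ∈ range k, C ((Q l).coeff m * α ^ m)) - ∑ m ∈ range k, C ((Q l).coeff m) * X ^ m := by
    rw [← Finset.sum_sub_distrib]
    exact Finset.sum_congr rfl fun m _ => by rw [C_mul, C_pow]; ring
  rw [h4, ← map_sum (C : ℂ →+* ℂ[X]), ← eval_eq_sum_range' hdeg]
  have h5 : ∑ m ∈ range k, C ((Q l).coeff m) * X ^ m = Q l := by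
    rw [Finset.sum_congr rfl fun m _ => C_mul_X_pow_eq_monomial (n := m) (a := (Q l).coeff m)]
    exact (as_sum_range' (Q l) k hdeg).symm
  rw [h5]

lemma blockC (c d : ℂ) (S : ℂ[X]) (hS : S.natDegree < k - 1) (α : ℂ) :
    ∑ n : Fin (k - 1), (C c * (C α - C d) * C α ^ (n : ℕ)) * C (S.coeff (n : ℕ))
      = C (c * ((α - d) * S.eval α)) := by
  have h2 : ∑ n : Fin (k - 1), c * (α - d) * (S.coeff (n : ℕ) * α ^ (n : ℕ))
      = c * ((α - d) * S.eval α) := by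
    rw [← Finset.mul_sum, sum_coeff_eval k hS α, mul_assoc]
  calc ∑ n : Fin (k - 1), (C c * (C α - C d) * C α ^ (n : ℕ)) * C (S.coeff (n : ℕ))
      = ∑ n : Fin (k - 1), C (c * (α - d) * (S.coeff (n : ℕ) * α ^ (n : ℕ))) := by
        refine Finset.sum_congr rfl fun n _ => ?_
        simp only [C_mul, C_sub, C_pow]
        ring
    _ = C (∑ n : Fin (k - 1), c * (α - d) * (S.coeff (n : ℕ) * α ^ (n : ℕ))) :=
        (map_sum (C : ℂ →+* ℂ[X]) _ _).symm
    _ = C (c * ((α - d) * S.eval α)) := by rw [h2]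

lemma blockX (c : ℂ) (Q : Fin k → ℂ[X]) (hdeg : (Q l).natDegree < k) (α : ℂ) :
    ∑ n : Fin (k - 1), (C c * (C α - X) * C α ^ (n : ℕ)) * xl k l Q n
      = C c * (C ((Q l).eval α) - Q l) := by
  calc ∑ n : Fin (k - 1), (C c * (C α - X) * C α ^ (n : ℕ)) * xl k l Q n
      = C c * ((C α - X) * (∑ n : Fin (k - 1), xl k l Q n * C α ^ (n : ℕ))) := by
        rw [Finset.mul_sum, Finset.mul_sum]
        exact Finset.sum_congr rfl fun n _ => by ring
    _ = C c * (C ((Q l).eval α) - Q l) := by rw [geo k l Q hdeg α]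

lemma blockVal (hk : 2 ≤ k) (Q : Fin k → ℂ[X]) (hdegQ : ∀ i, (Q i).natDegree ≤ k - 1)
    (hvan : ∀ j : Fin k, j ≠ l → (Q j).eval (y j) = 0) (m : Fin k) (c α : ℂ) :
    ∑ n : Fin (k - 1), (C c * (C α - up k y l m) * C α ^ (n : ℕ)) * xvec k y l Q (m, n)
      = if m = l then C c * (C ((Q l).eval α) - Q l) else C (c * (Q m).eval α) := by
  by_cases hm : m = l
  · subst hm
    rw [if_pos rfl]
    simp only [up, xvec, if_pos rfl]
    exact blockX k m c Q (by have := hdegQ m; omega) α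
  · rw [if_neg hm]
    simp only [up, xvec, if_neg hm]
    rw [blockC k c (y m) (Sq k y Q m) (natDegree_Sq_lt k y hk Q m (hdegQ m)) α]
    have hQm : (X - C (y m)) * Sq k y Q m = Q m :=
      mul_divByMonic_eq_iff_isRoot.mpr (hvan m hm)
    rw [← hQm]
    simp only [eval_mul, eval_sub, eval_X, eval_C]

lemma mulVec_xvec (hk : 2 ≤ k) (Q : Fin k → ℂ[X])
    (hdegQ : ∀ i, (Q i).natDegree ≤ k - 1)
    (hmatch : ∀ i j : Fin k, i ≠ j →
      lam i j * (Q i).eval (a i j) + mu i j * (Q j).eval (a i j) = 0)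
    (hvan : ∀ j : Fin k, j ≠ l → (Q j).eval (y j) = 0) :
    (Mp k a lam mu y l) *ᵥ (xvec k y l Q)
      = fun p => (-(Q l)) * C (wc k a lam mu l 0 p) := by
  funext p
  rcases p with ⟨i, t⟩
  have hne : colToRow k i t ≠ i := colToRow_ne k i t
  have hij : i ≠ colToRow k i t := Ne.symm hne
  have hsum : (Mp k a lam mu y l *ᵥ xvec k y l Q) (i, t)
      = ∑ m : Fin k, ∑ n : Fin (k - 1),
          Mp k a lam mu y l (i, t) (m, n) * xvec k y l Q (m, n) := by
    simp [Matrix.mulVec, dotProduct, Fintype.sum_prod_type]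
  have hzero : ∀ m : Fin k, m ≠ i → m ≠ colToRow k i t →
      ∀ n : Fin (k - 1), Mp k a lam mu y l (i, t) (m, n) = 0 := by
    intro m hmi hmj n
    simp only [Mp]
    rw [if_neg hmi, if_neg hmj]
  have hpair := Finset.sum_pair (f := fun m => ∑ n : Fin (k - 1),
    Mp k a lam mu y l (i, t) (m, n) * xvec k y l Q (m, n)) hij
  have hsplit : ∑ m : Fin k, ∑ n : Fin (k - 1),
        Mp k a lam mu y l (i, t) (m, n) * xvec k y l Q (m, n)
      = (∑ n : Fin (k - 1), Mp k a lam mu y l (i, t) (i, n) * xvec k y l Q (i, n))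
        + ∑ n : Fin (k - 1), Mp k a lam mu y l (i, t) (colToRow k i t, n)
            * xvec k y l Q (colToRow k i t, n) := by
    rw [← hpair]
    refine (Finset.sum_subset (Finset.subset_univ _) ?_).symm
    intro m _ hm
    simp only [Finset.mem_insert, Finset.mem_singleton] at hm
    push_neg at hm
    exact Finset.sum_eq_zero fun n _ => by rw [hzero m hm.1 hm.2 n, zero_mul]
  have hMpi : ∀ n : Fin (k - 1), Mp k a lam mu y l (i, t) (i, n)
      = C (lam i (colToRow k i t)) * (C (a i (colToRow k i t)) - up k y l i)
        * C (a i (colToRow k i t)) ^ (n : ℕ) := by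
    intro n
    simp only [Mp]
    simp
  have hMpj : ∀ n : Fin (k - 1), Mp k a lam mu y l (i, t) (colToRow k i t, n)
      = C (mu i (colToRow k i t)) * (C (a i (colToRow k i t)) - up k y l (colToRow k i t))
        * C (a i (colToRow k i t)) ^ (n : ℕ) := by
    intro n
    simp only [Mp]
    rw [if_neg hne]
    simp
  rw [hsum, hsplit]
  simp only [hMpi, hMpj]
  rw [blockVal k y l hk Q hdegQ hvan i (lam i (colToRow k i t)) (a i (colToRow k i t)),
    blockVal k y l hk Q hdegQ hvan (colToRow k i t) (mu i (colToRow k i t)) (a i (colToRow k i t))]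
  by_cases hil : i = l
  · have hjl : colToRow k i t ≠ l := hil ▸ hne
    rw [if_pos hil, if_neg hjl]
    simp only [wc, if_pos hil, pow_zero, mul_one]
    rw [hil]
    have h0 := hmatch l (colToRow k l t) (Ne.symm (colToRow_ne k l t))
    have h0' : C (lam l (colToRow k l t)) * C ((Q l).eval (a l (colToRow k l t)))
        + C (mu l (colToRow k l t)) * C ((Q (colToRow k l t)).eval (a l (colToRow k l t))) = 0 := by
      rw [← C_mul, ← C_mul, ← C_add, h0, map_zero]
    simp only [C_mul]
    linear_combination h0'
  · by_cases hjl : colToRow k i t = l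
    · rw [if_neg hil, if_pos hjl]
      simp only [wc, if_neg hil, if_pos hjl, pow_zero, mul_one]
      have h0 := hmatch i (colToRow k i t) hij
      rw [hjl] at h0 ⊢
      have h0' : C (lam i l) * C ((Q i).eval (a i l))
          + C (mu i l) * C ((Q l).eval (a i l)) = 0 := by
        rw [← C_mul, ← C_mul, ← C_add, h0, map_zero]
      simp only [C_mul]
      linear_combination h0'
    · rw [if_neg hil, if_neg hjl]
      simp only [wc, if_neg hil, if_neg hjl, map_zero, mul_zero]
      rw [← C_add, hmatch i (colToRow k i t) hij, map_zero]

lemma natDegree_Mp_le (p q : Fin k × Fin (k - 1)) :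
    (Mp k a lam mu y l p q).natDegree ≤ if q.1 = l then 1 else 0 := by
  by_cases hq : q.1 = l
  · rw [if_pos hq]
    have hup : ∀ m : Fin k, (up k y l m).natDegree ≤ 1 := by
      intro m
      rw [up]
      split <;> simp
    have key : ∀ (c d : ℂ) (e : ℂ[X]), e.natDegree ≤ 1 → ∀ n : ℕ,
        (C c * (C d - e) * C d ^ n).natDegree ≤ 1 := by
      intro c d e he n
      have h0 : (C d ^ n).natDegree = 0 := by
        rw [← C_pow]
        exact natDegree_C _
      have h1 : (C d - e).natDegree ≤ 1 := (natDegree_sub_le _ _).trans (by simp [he])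
      calc (C c * (C d - e) * C d ^ n).natDegree
          ≤ (C c * (C d - e)).natDegree + (C d ^ n).natDegree := natDegree_mul_le
        _ = (C c * (C d - e)).natDegree := by rw [h0, Nat.add_zero]
        _ ≤ (C c).natDegree + (C d - e).natDegree := natDegree_mul_le
        _ ≤ 1 := by simp [h1]
    simp only [Mp]
    split_ifs <;> first
      | exact key _ _ _ (hup _) _
      | simp
  · rw [if_neg hq]
    obtain ⟨c, hc⟩ := Mp_col_ne k a lam mu y l q hq p
    rw [hc]
    simp

lemma natDegree_det_le (M : Matrix (Fin k × Fin (k - 1)) (Fin k × Fin (k - 1)) ℂ[X])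
    (hM : ∀ p q, (M p q).natDegree ≤ if q.1 = l then 1 else 0) :
    M.det.natDegree ≤ k - 1 := by
  rw [Matrix.det_apply']
  apply natDegree_sum_le_of_forall_le
  intro σ _
  apply le_trans natDegree_mul_le
  have hε : (natDegree (Equiv.Perm.sign σ : ℂ[X])) = 0 := by
    rcases Int.units_eq_one_or (Equiv.Perm.sign σ) with h | h <;> rw [h] <;> simp
  rw [hε, zero_add]
  apply le_trans (natDegree_prod_le _ _)
  have step : ∑ q : Fin k × Fin (k - 1), (M (σ q) q).natDegree
      ≤ ∑ q : Fin k × Fin (k - 1), (if q.1 = l then 1 else 0) :=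
    Finset.sum_le_sum (fun q _ => hM (σ q) q)
  apply le_trans step
  rw [Fintype.sum_prod_type]
  have h1 : ∀ m : Fin k, (∑ _n : Fin (k - 1), (if m = l then 1 else 0))
      = if m = l then k - 1 else 0 := by
    intro m
    split_ifs <;> simp [Finset.card_univ]
  rw [Finset.sum_congr rfl fun m _ => h1 m, Finset.sum_ite_eq' Finset.univ l fun _ => k - 1]
  simp

lemma natDegree_det_Mp : (Mp k a lam mu y l).det.natDegree ≤ k - 1 :=
  natDegree_det_le k l _ (natDegree_Mp_le k a lam mu y l)

lemma prod_dvd_of_roots {p : ℂ[X]} (hp : p ≠ 0) {A : Finset ℂ} (h : ∀ β ∈ A, p.IsRoot β) :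
    (∏ β ∈ A, (X - C β)) ∣ p := by
  have hle : A.val ≤ p.roots := by
    rw [Multiset.le_iff_count]
    intro β
    by_cases hβ : β ∈ A
    · rw [Multiset.count_eq_one_of_mem A.nodup (Finset.mem_def.mp hβ), count_roots]
      have := (rootMultiplicity_pos hp).mpr (h β hβ)
      omega
    · rw [Multiset.count_eq_zero_of_notMem (by exact fun hc => hβ hc)]
      omega
  have h2 : (∏ β ∈ A, (X - C β)) = (A.val.map (fun β => X - C β)).prod := rfl
  rw [h2]
  exact dvd_trans (Multiset.prod_dvd_prod_of_le (Multiset.map_le_map hle))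
    (prod_multiset_X_sub_C_dvd p)

lemma eval_det_zero (ζ : ℂ) (p0 : ℂ[X]) (hp0 : p0 ≠ 0) (hdeg : p0.natDegree < k - 1)
    (hv1 : ∀ t : Fin (k - 1), (a l (colToRow k l t) - ζ) * p0.eval (a l (colToRow k l t)) = 0)
    (hv2 : ∀ i : Fin k, i ≠ l → (a i l - ζ) * p0.eval (a i l) = 0) :
    ((Mp k a lam mu y l).det).eval ζ = 0 := by
  have h0 : (evalRingHom ζ) (Mp k a lam mu y l).det
      = ((RingHom.mapMatrix (evalRingHom ζ)) (Mp k a lam mu y l)).det := RingHom.map_det _ _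
  rw [← coe_evalRingHom, h0, eval_Mp k a lam mu y l ζ]
  set N := Xi k a (fun i j => lam i j * (a i j - Function.update y l ζ i))
      (fun i j => mu i j * (a i j - Function.update y l ζ j)) with hN
  rw [← Matrix.exists_mulVec_eq_zero_iff]
  refine ⟨(fun q => if q.1 = l then p0.coeff (q.2 : ℕ) else 0), ?_, ?_⟩
  · intro hzero
    have h1 := congrFun hzero (l, ⟨p0.natDegree, hdeg⟩)
    simp only [if_pos rfl, Pi.zero_apply] at h1
    exact leadingCoeff_ne_zero.mpr hp0 h1
  · funext p
    rcases p with ⟨i, t⟩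
    have hne : colToRow k i t ≠ i := colToRow_ne k i t
    simp only [Pi.zero_apply]
    have h2 : (N *ᵥ fun q => if q.1 = l then p0.coeff (q.2 : ℕ) else 0) (i, t)
        = ∑ m : Fin k, ∑ n : Fin (k - 1),
            N (i, t) (m, n) * (if m = l then p0.coeff (n : ℕ) else 0) := by
      simp [Matrix.mulVec, dotProduct, Fintype.sum_prod_type]
    have hinner : ∀ m : Fin k,
        (∑ n : Fin (k - 1), N (i, t) (m, n) * (if m = l then p0.coeff (n : ℕ) else 0))
        = if m = l then ∑ n : Fin (k - 1), N (i, t) (l, n) * p0.coeff (n : ℕ) else 0 := by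
      intro m
      by_cases hm : m = l
      · subst hm
        simp
      · simp [hm]
    have h3 : (N *ᵥ fun q => if q.1 = l then p0.coeff (q.2 : ℕ) else 0) (i, t)
        = ∑ n : Fin (k - 1), N (i, t) (l, n) * p0.coeff (n : ℕ) := by
      rw [h2, Finset.sum_congr rfl fun m _ => hinner m, Finset.sum_ite_eq' Finset.univ l]
      simp
    rw [h3]
    by_cases hil : i = l
    · have hXi : ∀ n : Fin (k - 1), N (i, t) (l, n)
          = lam i (colToRow k i t) * (a i (colToRow k i t) - ζ)
            * a i (colToRow k i t) ^ (n : ℕ) := by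
        intro n
        rw [hN]
        simp only [Xi]
        rw [if_pos hil.symm, Function.update_apply, if_pos hil]
      rw [Finset.sum_congr rfl fun n _ => by rw [hXi n]]
      have hv := hv1 t
      rw [← hil] at hv
      have hsum : ∑ n : Fin (k - 1), lam i (colToRow k i t) * (a i (colToRow k i t) - ζ)
            * a i (colToRow k i t) ^ (n : ℕ) * p0.coeff (n : ℕ)
          = lam i (colToRow k i t)
            * ((a i (colToRow k i t) - ζ) * p0.eval (a i (colToRow k i t))) := by
        rw [← sum_coeff_eval k hdeg (a i (colToRow k i t)), Finset.mul_sum, Finset.mul_sum]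
        exact Finset.sum_congr rfl fun n _ => by ring
      rw [hsum, hv, mul_zero]
    · by_cases hjl : colToRow k i t = l
      · have hXi : ∀ n : Fin (k - 1), N (i, t) (l, n)
            = mu i l * (a i l - ζ) * a i l ^ (n : ℕ) := by
          intro n
          rw [hN]
          simp only [Xi]
          rw [if_neg (fun h => hil h.symm), if_pos hjl.symm, hjl, Function.update_self]
        rw [Finset.sum_congr rfl fun n _ => by rw [hXi n]]
        have hsum : ∑ n : Fin (k - 1), mu i l * (a i l - ζ) * a i l ^ (n : ℕ) * p0.coeff (n : ℕ)
            = mu i l * ((a i l - ζ) * p0.eval (a i l)) := by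
          rw [← sum_coeff_eval k hdeg (a i l), Finset.mul_sum, Finset.mul_sum]
          exact Finset.sum_congr rfl fun n _ => by ring
        rw [hsum, hv2 i hil, mul_zero]
      · have hXi : ∀ n : Fin (k - 1), N (i, t) (l, n) = 0 := by
          intro n
          rw [hN]
          simp only [Xi]
          rw [if_neg (fun h => hil h.symm), if_neg (fun h => hjl h.symm)]
        rw [Finset.sum_congr rfl fun n _ => by rw [hXi n, zero_mul]]
        simp

lemma eq_C_mul_of_dvd {p PA : ℂ[X]} (hp : p ≠ 0) (hPA : PA.Monic) (hdvd : PA ∣ p)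
    (hdeg : p.natDegree ≤ PA.natDegree) : ∃ c : ℂ, p = C c * PA := by
  obtain ⟨h, rfl⟩ := hdvd
  have hh : h ≠ 0 := fun hc => hp (by rw [hc, mul_zero])
  have hd : h.natDegree = 0 := by
    have := natDegree_mul hPA.ne_zero hh
    omega
  obtain ⟨c, hc⟩ := natDegree_eq_zero.mp hd
  exact ⟨c, by rw [← hc]; ring⟩



end Aux

/-- inversion of the Abel map. If `Λ(y_1,…,y_k) ≠ 0` and `(Q_1,…,Q_k)` is a
section (matching conditions) with `Q_j(y_j) = 0` for `j ≠ l`, then up to a constant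
multiple `Q_l(ζ) = Λ(y_1,…,y_{l−1},ζ,y_{l+1},…,y_k)`. -/
theorem Q_l_eq_const_mul_Lambda (k : ℕ) (hk : 2 ≤ k)
    (a lam mu : Fin k → Fin k → ℂ)
    (hlam : ∀ i j : Fin k, i ≠ j → lam i j ≠ 0)
    (hmu : ∀ i j : Fin k, i ≠ j → mu i j ≠ 0)
    (y : Fin k → ℂ)
    (hy : ∀ i j : Fin k, i ≠ j → y i ≠ a i j ∧ y i ≠ a j i)
    (hL : LambdaFun k a lam mu y ≠ 0)
    (l : Fin k) (Q : Fin k → Polynomial ℂ)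
    (hdeg : ∀ i, (Q i).degree ≤ (k - 1 : ℕ))
    (hmatch : ∀ i j : Fin k, i ≠ j →
      lam i j * (Q i).eval (a i j) + mu i j * (Q j).eval (a i j) = 0)
    (hvan : ∀ j : Fin k, j ≠ l → (Q j).eval (y j) = 0) :
    ∃ c : ℂ, ∀ ζ : ℂ,
      (Q l).eval ζ = c * LambdaFun k a lam mu (Function.update y l ζ) := by
  classical
  have hdegQ : ∀ i, (Q i).natDegree ≤ k - 1 := fun i => natDegree_le_of_degree_le (hdeg i)
  have hev : ∀ ζ : ℂ, ((Mp k a lam mu y l).det).eval ζ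
      = LambdaFun k a lam mu (Function.update y l ζ) := eval_det_Mp k a lam mu y l
  have hΛy : ((Mp k a lam mu y l).det).eval (y l) = LambdaFun k a lam mu y := by
    rw [hev (y l), Function.update_eq_self]
  have hΛne : (Mp k a lam mu y l).det ≠ 0 := by
    intro h
    apply hL
    rw [← hΛy, h, eval_zero]
  suffices hsuff : ∃ c : ℂ, Q l = C c * (Mp k a lam mu y l).det by
    obtain ⟨c, hc⟩ := hsuff
    refine ⟨c, fun ζ => ?_⟩
    rw [hc, eval_mul, eval_C, hev ζ]
  by_cases hQl0 : Q l = 0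
  · exact ⟨0, by rw [hQl0, map_zero, zero_mul]⟩
  by_cases hex : ∃ j : Fin k, j ≠ l ∧ Q j ≠ 0
  · obtain ⟨j0, hj0l, hQj0⟩ := hex
    have hroot : (Q j0).IsRoot (y j0) := hvan j0 hj0l
    have hSmul : (X - C (y j0)) * Sq k y Q j0 = Q j0 := mul_divByMonic_eq_iff_isRoot.mpr hroot
    have hSne : Sq k y Q j0 ≠ 0 := by
      intro h
      rw [h, mul_zero] at hSmul
      exact hQj0 hSmul.symm
    have hSdeg : (Sq k y Q j0).natDegree < k - 1 := natDegree_Sq_lt k y hk Q j0 (hdegQ j0)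
    have hid := mulVec_xvec k a lam mu y l hk Q hdegQ hmatch hvan
    have hadj : (Mp k a lam mu y l).det • xvec k y l Q
        = (-(Q l)) • ((Mp k a lam mu y l).adjugate *ᵥ (fun p => C (wc k a lam mu l 0 p))) := by
      have h1 := congrArg (fun v => (Mp k a lam mu y l).adjugate *ᵥ v) hid
      rw [Matrix.mulVec_mulVec, Matrix.adjugate_mul, Matrix.smul_mulVec,
        Matrix.one_mulVec] at h1
      rw [h1, show (fun p => (-(Q l)) * C (wc k a lam mu l 0 p))
          = (-(Q l)) • (fun p => C (wc k a lam mu l 0 p)) from rfl,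
        Matrix.mulVec_smul]
    obtain ⟨c1, hc1⟩ := cramer_col_const k a lam mu y l
      (j0, ⟨(Sq k y Q j0).natDegree, hSdeg⟩) hj0l
    have hcram : ((Mp k a lam mu y l).adjugate *ᵥ (fun p => C (wc k a lam mu l 0 p)))
        (j0, ⟨(Sq k y Q j0).natDegree, hSdeg⟩) = C c1 := by
      rw [← Matrix.cramer_eq_adjugate_mulVec, Matrix.cramer_apply, hc1]
    have hkey := congrFun hadj (j0, ⟨(Sq k y Q j0).natDegree, hSdeg⟩)
    simp only [Pi.smul_apply, smul_eq_mul] at hkey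
    rw [hcram] at hkey
    have hx : xvec k y l Q (j0, ⟨(Sq k y Q j0).natDegree, hSdeg⟩)
        = C ((Sq k y Q j0).leadingCoeff) := by
      simp only [xvec]
      rw [if_neg hj0l]
      rfl
    rw [hx] at hkey
    have hsne : (Sq k y Q j0).leadingCoeff ≠ 0 := leadingCoeff_ne_zero.mpr hSne
    by_cases hc10 : c1 = 0
    · exfalso
      rw [hc10, map_zero, mul_zero] at hkey
      rcases mul_eq_zero.mp hkey with h | h
      · exact hΛne h
      · exact hsne (C_eq_zero.mp h)
    · refine ⟨-(Sq k y Q j0).leadingCoeff / c1, ?_⟩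
      apply mul_right_cancel₀ (show (C c1 : ℂ[X]) ≠ 0 from fun h => hc10 (C_eq_zero.mp h))
      rw [show C (-(Sq k y Q j0).leadingCoeff / c1) * (Mp k a lam mu y l).det * C c1
          = (C (-(Sq k y Q j0).leadingCoeff / c1) * C c1) * (Mp k a lam mu y l).det from by ring,
        ← C_mul, div_mul_cancel₀ _ hc10, map_neg]
      linear_combination hkey
  · push_neg at hex
    set A : Finset ℂ := ((Finset.univ.erase l).image (fun j => a l j))
        ∪ ((Finset.univ.erase l).image (fun i => a i l)) with hA
    have hrootsQ : ∀ β ∈ A, (Q l).IsRoot β := by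
      intro β hβ
      rcases Finset.mem_union.mp hβ with h | h
      · obtain ⟨j, hj, rfl⟩ := Finset.mem_image.mp h
        have hjl : j ≠ l := Finset.ne_of_mem_erase hj
        have hm := hmatch l j (Ne.symm hjl)
        rw [hex j hjl] at hm
        simp only [eval_zero, mul_zero, add_zero] at hm
        exact (mul_eq_zero.mp hm).resolve_left (hlam l j (Ne.symm hjl))
      · obtain ⟨i, hi, rfl⟩ := Finset.mem_image.mp h
        have hil : i ≠ l := Finset.ne_of_mem_erase hi
        have hm := hmatch i l hil
        rw [hex i hil] at hm
        simp only [eval_zero, mul_zero, zero_add] at hm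
        exact (mul_eq_zero.mp hm).resolve_left (hmu i l hil)
    have hmemA1 : ∀ t : Fin (k - 1), a l (colToRow k l t) ∈ A := fun t =>
      Finset.mem_union_left _ (Finset.mem_image.mpr ⟨colToRow k l t,
        Finset.mem_erase.mpr ⟨colToRow_ne k l t, Finset.mem_univ _⟩, rfl⟩)
    have hmemA2 : ∀ i : Fin k, i ≠ l → a i l ∈ A := fun i hi =>
      Finset.mem_union_right _ (Finset.mem_image.mpr ⟨i,
        Finset.mem_erase.mpr ⟨hi, Finset.mem_univ _⟩, rfl⟩)
    set PA : ℂ[X] := ∏ β ∈ A, (X - C β) with hPA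
    have hPAmonic : PA.Monic := monic_prod_of_monic _ _ (fun β _ => monic_X_sub_C β)
    have hPAroot : ∀ β ∈ A, PA.eval β = 0 := by
      intro β hβ
      rw [hPA, eval_prod]
      exact Finset.prod_eq_zero hβ (by simp)
    have hPAdeg : PA.natDegree = A.card := by
      rw [hPA, natDegree_prod _ _ (fun β _ => X_sub_C_ne_zero β)]
      simp [natDegree_X_sub_C]
    have hdvdQ : PA ∣ Q l := prod_dvd_of_roots hQl0 hrootsQ
    have hcard_le : A.card ≤ k - 1 := by
      have h1 := natDegree_le_of_dvd hdvdQ hQl0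
      have h2 := hdegQ l
      omega
    have hcard_ge : k - 1 ≤ A.card := by
      by_contra hlt
      push_neg at hlt
      have hp0ne : PA * X ^ (k - 2 - A.card) ≠ 0 :=
        mul_ne_zero hPAmonic.ne_zero (pow_ne_zero _ X_ne_zero)
      have hp0deg : (PA * X ^ (k - 2 - A.card)).natDegree < k - 1 := by
        rw [natDegree_mul hPAmonic.ne_zero (pow_ne_zero _ X_ne_zero),
          natDegree_X_pow, hPAdeg]
        omega
      have hp0van : ∀ β ∈ A, (PA * X ^ (k - 2 - A.card)).eval β = 0 := fun β hβ => by
        rw [eval_mul, hPAroot β hβ, zero_mul]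
      have hz := eval_det_zero k a lam mu y l (y l) (PA * X ^ (k - 2 - A.card)) hp0ne hp0deg
        (fun t => by rw [hp0van _ (hmemA1 t), mul_zero])
        (fun i hi => by rw [hp0van _ (hmemA2 i hi), mul_zero])
      rw [hΛy] at hz
      exact hL hz
    have hcard : A.card = k - 1 := le_antisymm hcard_le hcard_ge
    have hrootsL : ∀ β ∈ A, ((Mp k a lam mu y l).det).IsRoot β := by
      intro β hβ
      have hrootβ : PA.IsRoot β := hPAroot β hβ
      have hmulβ : (X - C β) * (PA /ₘ (X - C β)) = PA := mul_divByMonic_eq_iff_isRoot.mpr hrootβ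
      have hSβne : PA /ₘ (X - C β) ≠ 0 := by
        intro h
        rw [h, mul_zero] at hmulβ
        exact hPAmonic.ne_zero hmulβ.symm
      have hSβdeg : (PA /ₘ (X - C β)).natDegree < k - 1 := by
        rw [natDegree_divByMonic _ (monic_X_sub_C β), natDegree_X_sub_C, hPAdeg, hcard]
        omega
      have hfact : ∀ γ : ℂ, (γ - β) * (PA /ₘ (X - C β)).eval γ = PA.eval γ := by
        intro γ
        conv_rhs => rw [← hmulβ]
        rw [eval_mul, eval_sub, eval_X, eval_C]
      exact eval_det_zero k a lam mu y l β (PA /ₘ (X - C β)) hSβne hSβdeg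
        (fun t => by rw [hfact, hPAroot _ (hmemA1 t)])
        (fun i hi => by rw [hfact, hPAroot _ (hmemA2 i hi)])
    have hdvdL : PA ∣ (Mp k a lam mu y l).det := prod_dvd_of_roots hΛne hrootsL
    obtain ⟨cq, hcq⟩ := eq_C_mul_of_dvd hQl0 hPAmonic hdvdQ
      (by rw [hPAdeg, hcard]; exact hdegQ l)
    obtain ⟨cL, hcL⟩ := eq_C_mul_of_dvd hΛne hPAmonic hdvdL
      (by rw [hPAdeg, hcard]; exact natDegree_det_Mp k a lam mu y l)
    have hcLne : cL ≠ 0 := by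
      intro h
      rw [h, map_zero, zero_mul] at hcL
      exact hΛne hcL
    refine ⟨cq / cL, ?_⟩
    rw [hcq, hcL, ← mul_assoc, ← C_mul, div_mul_cancel₀ _ hcLne]


end

end ReducibleSpectral
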